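/- With a₀,…,a₃, g₀,…,g₃ and V as in the tetrahedron setup, for every vector w ∈ ℝ³ one has ∑_{i ≠ j} (−18 V² ‖g_k × g_l‖²) · ⟨gᵢ, w⟩ · gⱼ = w, where for each ordered pair (i,j) with i ≠ j, {k,l} = {0,1,2,3} ∖ {i,j}. (Lemma 4.10: the local averaging operator Π̄_T² w = ∑_{F ≠ F'} ω_{FF'}^T (|F'|/|T|) n_{F'} l_F(w), with l_F(w) = |F| w·n_F for a constant field w, reproduces constant vector fields.) -/

import Mathlib

/-- The cross product on `ℝ³`. -/
def cross3 (a b : Fin 3 → ℝ) : Fin 3 → ℝ :=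
  ![a 1 * b 2 - a 2 * b 1, a 2 * b 0 - a 0 * b 2, a 0 * b 1 - a 1 * b 0]

/-!
The barycentric gradients are dual to the vertices: `∑ᵢ gᵢ = 0`, `∑ᵢ ⟨gᵢ, u⟩ aᵢ = u` and
`∑ᵢ ⟨aᵢ, u⟩ gᵢ = u`. Writing `−‖aᵢ − aⱼ‖²/2 = ⟨aᵢ, aⱼ⟩ − ‖aᵢ‖²/2 − ‖aⱼ‖²/2`, these identities give
`∑_{i,j} −½‖aᵢ − aⱼ‖² ⟨gᵢ, w⟩ gⱼ = w` for a simplex of any dimension. In ℝ³ the weight of the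
pair `(i, j)` is exactly `−½‖aᵢ − aⱼ‖²`: the vector `g_k × g_l` is orthogonal to `g_k` and `g_l`,
so the first duality identity makes it a multiple `t (aᵢ − aⱼ)` of the opposite edge, and
`t = ⟨gᵢ, g_k × g_l⟩ = ±det(g₁, g₂, g₃) = ±1/(6V)`.
-/

open Matrix Finset

variable {n : ℕ}

def IsBarycentricGradients (a g : Fin (n + 1) → Fin n → ℝ) : Prop :=
  ∀ i j k, g i ⬝ᵥ (a j - a k) = (if i = j then 1 else 0) - (if i = k then 1 else 0)

def edgeMatrix (a : Fin (n + 1) → Fin n → ℝ) : Matrix (Fin n) (Fin n) ℝ :=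
  Matrix.of fun r c => a r.succ c - a 0 c

namespace IsBarycentricGradients

variable {a g : Fin (n + 1) → Fin n → ℝ}

theorem edgeMatrix_mul_transpose (hg : IsBarycentricGradients a g) :
    edgeMatrix a * (Matrix.of (g ∘ Fin.succ))ᵀ = 1 := by
  ext r s
  change (a r.succ - a 0) ⬝ᵥ g s.succ = _
  rw [dotProduct_comm, hg, one_apply]
  simp only [Fin.succ_inj, Fin.succ_ne_zero, if_false, sub_zero, eq_comm]

theorem transpose_mul_edgeMatrix (hg : IsBarycentricGradients a g) :
    (Matrix.of (g ∘ Fin.succ))ᵀ * edgeMatrix a = 1 :=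
  mul_eq_one_comm.mp hg.edgeMatrix_mul_transpose

theorem det_edgeMatrix_mul_det (hg : IsBarycentricGradients a g) :
    (edgeMatrix a).det * (Matrix.of (g ∘ Fin.succ)).det = 1 := by
  simpa [det_mul, mul_comm] using congrArg det hg.transpose_mul_edgeMatrix

theorem sum_eq_zero (hg : IsBarycentricGradients a g) : ∑ i, g i = 0 := by
  have hE : edgeMatrix a *ᵥ ∑ i, g i = 0 := by
    ext r
    change (a r.succ - a 0) ⬝ᵥ ∑ i, g i = 0
    rw [dotProduct_sum]
    simp only [← dotProduct_comm (g _), hg _ r.succ 0]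
    simp [Finset.sum_sub_distrib]
  calc ∑ i, g i = ((Matrix.of (g ∘ Fin.succ))ᵀ * edgeMatrix a) *ᵥ ∑ i, g i := by
        rw [hg.transpose_mul_edgeMatrix, one_mulVec]
    _ = 0 := by rw [← mulVec_mulVec, hE, mulVec_zero]

theorem sum_dotProduct_smul (hg : IsBarycentricGradients a g) (u : Fin n → ℝ) :
    ∑ i, (g i ⬝ᵥ u) • a i = u := by
  have h0 : ∑ i, (g i ⬝ᵥ u) • a 0 = 0 := by
    rw [← Finset.sum_smul, ← sum_dotProduct, hg.sum_eq_zero, zero_dotProduct, zero_smul]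
  calc ∑ i, (g i ⬝ᵥ u) • a i = ∑ i, (g i ⬝ᵥ u) • (a i - a 0) := by
        simp only [smul_sub, Finset.sum_sub_distrib, h0, sub_zero]
    _ = (Matrix.of (g ∘ Fin.succ) *ᵥ u) ᵥ* edgeMatrix a := by
        rw [Fin.sum_univ_succ, sub_self, smul_zero, zero_add, vecMul_eq_sum]
        rfl
    _ = u := by
        rw [← vecMul_transpose, vecMul_vecMul, hg.transpose_mul_edgeMatrix, vecMul_one]

theorem sum_dotProduct_smul' (hg : IsBarycentricGradients a g) (u : Fin n → ℝ) :
    ∑ i, (a i ⬝ᵥ u) • g i = u := by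
  ext m
  have key := congrArg (· ⬝ᵥ u) (hg.sum_dotProduct_smul (Pi.single m 1))
  simp only [sum_dotProduct, smul_dotProduct, smul_eq_mul, dotProduct_single_one,
    single_one_dotProduct] at key
  simpa [Finset.sum_apply, mul_comm] using key

theorem sum_sum_neg_half_dist_sq_smul (hg : IsBarycentricGradients a g) (w : Fin n → ℝ) :
    ∑ i, ∑ j, (-((a i - a j) ⬝ᵥ (a i - a j) / 2) * (g i ⬝ᵥ w)) • g j = w := by
  have hterm : ∀ i j, (-((a i - a j) ⬝ᵥ (a i - a j) / 2) * (g i ⬝ᵥ w)) • g j =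
      ((g i ⬝ᵥ w) * (a i ⬝ᵥ a j)) • g j - (a i ⬝ᵥ a i / 2 * (g i ⬝ᵥ w)) • g j
        - (g i ⬝ᵥ w) • ((a j ⬝ᵥ a j / 2) • g j) := by
    intro i j
    rw [smul_smul, ← sub_smul, ← sub_smul]
    congr 1
    simp only [sub_dotProduct, dotProduct_sub, dotProduct_comm (a j) (a i)]
    ring
  have hmixed : ∑ i, ∑ j, ((g i ⬝ᵥ w) * (a i ⬝ᵥ a j)) • g j = w := by
    rw [Finset.sum_comm]
    simp only [← Finset.sum_smul, ← smul_eq_mul, ← smul_dotProduct, ← sum_dotProduct,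
      hg.sum_dotProduct_smul, dotProduct_comm w]
    exact hg.sum_dotProduct_smul' w
  simp only [hterm, Finset.sum_sub_distrib, ← Finset.smul_sum, ← Finset.sum_smul, hmixed,
    hg.sum_eq_zero, smul_zero, ← sum_dotProduct, zero_dotProduct, zero_smul, sub_zero]

end IsBarycentricGradients

theorem sq_dotProduct_cross_eq_of_sum_eq_zero {R : Type*} [CommRing R] (v : Fin 4 → Fin 3 → R)
    (hv : ∑ i, v i = 0) {i k l : Fin 4} (hik : i ≠ k) (hil : i ≠ l) (hkl : k ≠ l) :
    (v i ⬝ᵥ v k ⨯₃ v l) ^ 2 = (v 1 ⬝ᵥ v 2 ⨯₃ v 3) ^ 2 := by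
  have h0 : v 0 = -(v 1 + v 2 + v 3) := by
    rw [Fin.sum_univ_four] at hv
    exact eq_neg_of_add_eq_zero_left (by rw [← hv]; abel)
  fin_cases i <;> fin_cases k <;> fin_cases l <;> simp at hik hil hkl ⊢ <;>
    simp [h0, cross_apply, dotProduct, Fin.sum_univ_three] <;> ring

theorem Fin.pairwise_ne_of_insert_eq_univ : ∀ i j k l : Fin 4,
    ({i, j, k, l} : Finset (Fin 4)) = univ →
      i ≠ j ∧ i ≠ k ∧ i ≠ l ∧ j ≠ k ∧ j ≠ l ∧ k ≠ l := by
  decide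

theorem Fin.sum_univ_four_of_insert_eq_univ {M : Type*} [AddCommMonoid M] (f : Fin 4 → M)
    {i j k l : Fin 4} (h : ({i, j, k, l} : Finset (Fin 4)) = univ) :
    ∑ p, f p = f i + f j + f k + f l := by
  obtain ⟨hij, hik, hil, hjk, hjl, hkl⟩ := Fin.pairwise_ne_of_insert_eq_univ i j k l h
  rw [← h, sum_insert (by simp [hij, hik, hil]), sum_insert (by simp [hjk, hjl]),
    sum_insert (by simp [hkl]), sum_singleton, add_assoc, add_assoc]

namespace IsBarycentricGradients

variable {a g : Fin 4 → Fin 3 → ℝ}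

theorem cross_eq_smul_sub (hg : IsBarycentricGradients a g) {i j k l : Fin 4}
    (h : ({i, j, k, l} : Finset (Fin 4)) = univ) :
    g k ⨯₃ g l = (g i ⬝ᵥ g k ⨯₃ g l) • (a i - a j) := by
  set x := g k ⨯₃ g l
  have hk : g k ⬝ᵥ x = 0 := dot_self_cross _ _
  have hl : g l ⬝ᵥ x = 0 := dot_cross_self _ _
  have hj : g j ⬝ᵥ x = -(g i ⬝ᵥ x) := by
    have := congrArg (· ⬝ᵥ x) hg.sum_eq_zero
    simp only [Fin.sum_univ_four_of_insert_eq_univ _ h, add_dotProduct, zero_dotProduct, hk, hl,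
      add_zero] at this
    linear_combination this
  calc x = ∑ p, (g p ⬝ᵥ x) • a p := (hg.sum_dotProduct_smul x).symm
    _ = (g i ⬝ᵥ x) • (a i - a j) := by
      rw [Fin.sum_univ_four_of_insert_eq_univ _ h, hk, hl, hj, smul_sub]
      simp only [zero_smul, add_zero, neg_smul, sub_eq_add_neg]

theorem det_edgeMatrix_sq_mul_cross_dotProduct_self (hg : IsBarycentricGradients a g)
    {i j k l : Fin 4} (h : ({i, j, k, l} : Finset (Fin 4)) = univ) :
    (edgeMatrix a).det ^ 2 * (g k ⨯₃ g l ⬝ᵥ g k ⨯₃ g l) = (a i - a j) ⬝ᵥ (a i - a j) := by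
  obtain ⟨-, hik, hil, -, -, hkl⟩ := Fin.pairwise_ne_of_insert_eq_univ i j k l h
  have htriple : (g i ⬝ᵥ g k ⨯₃ g l) ^ 2 = (Matrix.of (g ∘ Fin.succ)).det ^ 2 := by
    rw [sq_dotProduct_cross_eq_of_sum_eq_zero g hg.sum_eq_zero hik hil hkl, triple_product_eq_det]
    congr 2
    ext r : 1
    fin_cases r <;> rfl
  rw [hg.cross_eq_smul_sub h, smul_dotProduct, dotProduct_smul, smul_eq_mul, smul_eq_mul]
  linear_combination ((edgeMatrix a).det ^ 2 * ((a i - a j) ⬝ᵥ (a i - a j))) * htriple +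
    ((edgeMatrix a).det * (Matrix.of (g ∘ Fin.succ)).det + 1) * ((a i - a j) ⬝ᵥ (a i - a j)) *
      hg.det_edgeMatrix_mul_det

end IsBarycentricGradients

theorem sum_cross3_sq (u v : Fin 3 → ℝ) : ∑ m, cross3 u v m ^ 2 = u ⨯₃ v ⬝ᵥ u ⨯₃ v := by
  simp only [dotProduct, sq]
  rfl

theorem stmt_7_general (a : Fin 4 → Fin 3 → ℝ) (g : Fin 4 → Fin 3 → ℝ)
    (hg : ∀ i j k : Fin 4, ∑ m, g i m * (a j m - a k m) =
      (if i = j then (1 : ℝ) else 0) - (if i = k then (1 : ℝ) else 0))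
    (V : ℝ)
    (hV : V = |(Matrix.of fun (r : Fin 3) (c : Fin 3) => a r.succ c - a 0 c).det| / 6)
    (kl : Fin 4 → Fin 4 → Fin 4 × Fin 4)
    (hkl : ∀ i j : Fin 4, i ≠ j →
      ({i, j, (kl i j).1, (kl i j).2} : Finset (Fin 4)) = Finset.univ)
    (w : Fin 3 → ℝ) :
    (∑ i : Fin 4, ∑ j : Fin 4,
        if i ≠ j then
          ((-(18 * V ^ 2 * ∑ m, (cross3 (g (kl i j).1) (g (kl i j).2)) m ^ 2)) *
            ∑ m, g i m * w m) • g j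
        else 0) = w := by
  have hbar : IsBarycentricGradients a g := hg
  have hV' : V = |(edgeMatrix a).det| / 6 := hV
  have hV2 : 18 * V ^ 2 = (edgeMatrix a).det ^ 2 / 2 := by
    rw [hV', div_pow, sq_abs]
    ring
  refine (sum_congr rfl fun i _ => sum_congr rfl fun j _ => ?_).trans
    (hbar.sum_sum_neg_half_dist_sq_smul w)
  by_cases hij : i = j
  · simp [hij]
  · rw [if_pos hij, sum_cross3_sq, hV2,
      ← hbar.det_edgeMatrix_sq_mul_cross_dotProduct_self (hkl i j hij)]
    congr 2
    ring

/-- Lemma 4.10: for a nondegenerate tetrahedron with vertices `a 0, …, a 3`,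
barycentric gradients `g 0, …, g 3` (characterized by `⟨g i, a j − a k⟩ = δᵢⱼ − δᵢₖ`)
and volume `V = |det(a₁−a₀, a₂−a₀, a₃−a₀)|/6`, with for each ordered pair `(i,j)`,
`i ≠ j`, the complementary pair `{k,l}` encoded by `kl` (so that
`{i, j, (kl i j).1, (kl i j).2} = {0,1,2,3}`), the averaging operator reproduces
constants: for every `w ∈ ℝ³`, `∑_{i≠j} (−18 V² ‖g_k × g_l‖²) ⟨gᵢ, w⟩ gⱼ = w`. -/
theorem stmt_7 (a : Fin 4 → Fin 3 → ℝ) (g : Fin 4 → Fin 3 → ℝ)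
    (ha : AffineIndependent ℝ a)
    (hg : ∀ i j k : Fin 4, ∑ m, g i m * (a j m - a k m) =
      (if i = j then (1 : ℝ) else 0) - (if i = k then (1 : ℝ) else 0))
    (V : ℝ)
    (hV : V = |(Matrix.of fun (r : Fin 3) (c : Fin 3) => a r.succ c - a 0 c).det| / 6)
    (kl : Fin 4 → Fin 4 → Fin 4 × Fin 4)
    (hkl : ∀ i j : Fin 4, i ≠ j →
      ({i, j, (kl i j).1, (kl i j).2} : Finset (Fin 4)) = Finset.univ)
    (w : Fin 3 → ℝ) :
    (∑ i : Fin 4, ∑ j : Fin 4,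
        if i ≠ j then
          ((-(18 * V ^ 2 * ∑ m, (cross3 (g (kl i j).1) (g (kl i j).2)) m ^ 2)) *
            ∑ m, g i m * w m) • g j
        else 0) = w :=
  stmt_7_general a g hg V hV kl hkl w
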